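/- arXiv:0908.1886 — 3 statements merged into one kernel-verified Lean document; each statement's English description precedes it below -/
import Mathlib

section
/- Let K be a commutative ring, A a commutative K-algebra, and P, Q A-modules. For every Q-valued differential operator Δ of order ≤ s on P, the map f_Δ : P → Diff_s(A, Q) defined by (f_Δ p)(a) = Δ(a p) is a homomorphism from the A-module P to Diff_s(A, Q) endowed with its A•-module structure; Δ factorizes uniquely as Δ = h_s ∘ f_Δ, where h_s : Diff_s(A, Q) → Q is given by h_s(∇) = ∇(1); and the assignment Δ ↦ f_Δ is an isomorphism of Diff_s(P, Q) onto the module of A-linear maps from P to Diff_s(A, Q) taken with its A•-module structure. -/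
/-! Differential operators on modules over a commutative ring, following the definition
`(δ_a Φ)(p) = a Φ(p) − Φ(a p)`: a `K`-linear map `Δ : P → Q` is a `Q`-valued differential
operator of order `≤ s` on `P` if `δ_{a₀} ∘ ⋯ ∘ δ_{a_s} Δ = 0` for all `a₀, …, a_s ∈ A`. -/

/-- `(δ_a Φ)(p) = a • Φ p − Φ (a • p)`. -/
def deltaOp {A P Q : Type*} [CommRing A]
    [AddCommGroup P] [Module A P] [AddCommGroup Q] [Module A Q]
    (a : A) (Φ : P → Q) : P → Q :=
  fun p => a • Φ p - Φ (a • p)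

/-- Iterated application `δ_{a₀} ∘ ⋯ ∘ δ_{a_k}` of the operators `δ_a`. -/
def iterDeltaOp {A P Q : Type*} [CommRing A]
    [AddCommGroup P] [Module A P] [AddCommGroup Q] [Module A Q] :
    List A → (P → Q) → (P → Q)
  | [], Φ => Φ
  | a :: l, Φ => deltaOp a (iterDeltaOp l Φ)

/-- `Φ : P → Q` is a `Q`-valued differential operator of order `≤ s` on `P` if
`δ_{a₀} ∘ ⋯ ∘ δ_{a_s} Φ = 0` for every tuple of `s + 1` elements of `A`. -/
def IsDiffOp (A : Type*) {P Q : Type*} [CommRing A]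
    [AddCommGroup P] [Module A P] [AddCommGroup Q] [Module A Q]
    (s : ℕ) (Φ : P → Q) : Prop :=
  ∀ l : List A, l.length = s + 1 → iterDeltaOp l Φ = 0

/-- The `A`-module homomorphism `f_Δ : P → Diff_s(A, Q)`, `(f_Δ p)(a) = Δ (a • p)`,
associated with a differential operator `Δ : P → Q`. -/
def fhat {K : Type*} (A : Type*) {P Q : Type*} [CommRing K] [CommRing A] [Algebra K A]
    [AddCommGroup P] [Module K P] [Module A P] [IsScalarTower K A P]
    [AddCommGroup Q] [Module K Q] [Module A Q] [IsScalarTower K A Q]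
    (Δ : P →ₗ[K] Q) (p : P) : A →ₗ[K] Q where
  toFun a := Δ (a • p)
  map_add' a b := by simp [add_smul]
  map_smul' c a := by simp [smul_assoc]

lemma iterDelta_pre_smul {A P Q : Type*} [CommRing A]
    [AddCommGroup P] [Module A P] [AddCommGroup Q] [Module A Q]
    (l : List A) (Φ : P → Q) (a : A) :
    iterDeltaOp l (fun p => Φ (a • p)) = fun p => iterDeltaOp l Φ (a • p) := by
  induction l with
  | nil => rfl
  | cons b l ih =>
    funext p
    simp only [iterDeltaOp, ih, deltaOp]
    rw [smul_smul, smul_smul, mul_comm a b]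

lemma fhat_iter {K : Type*} (A : Type*) {P Q : Type*} [CommRing K] [CommRing A] [Algebra K A]
    [AddCommGroup P] [Module K P] [Module A P] [IsScalarTower K A P]
    [AddCommGroup Q] [Module K Q] [Module A Q] [IsScalarTower K A Q]
    (l : List A) (Δ : P →ₗ[K] Q) (p : P) :
    iterDeltaOp l ⇑(fhat A Δ p) = fun b => iterDeltaOp l ⇑Δ (b • p) := by
  induction l with
  | nil => rfl
  | cons a l ih =>
    funext b
    simp only [iterDeltaOp, deltaOp, ih]
    rw [smul_eq_mul, mul_smul]

lemma g_iter {K A P Q : Type*} [CommRing K] [CommRing A] [Algebra K A]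
    [AddCommGroup P] [Module K P] [Module A P] [IsScalarTower K A P]
    [AddCommGroup Q] [Module K Q] [Module A Q] [IsScalarTower K A Q]
    {g : P → (A →ₗ[K] Q)}
    (hg : ∀ (a : A) (p : P) (b : A), g (a • p) b = g p (a * b))
    (l : List A) (p : P) :
    iterDeltaOp l (fun p => g p 1) p = iterDeltaOp l ⇑(g p) 1 := by
  induction l generalizing p with
  | nil => rfl
  | cons a l ih =>
    simp only [iterDeltaOp, deltaOp]
    rw [ih, ih]
    have h1 : ⇑(g (a • p)) = fun b => g p (a * b) := funext (hg a p)
    rw [h1]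
    have h2 : iterDeltaOp l (fun b => g p (a * b)) 1 = iterDeltaOp l ⇑(g p) (a * 1) := by
      have h := iterDelta_pre_smul l ⇑(g p) a
      simp only [smul_eq_mul] at h
      exact congrFun h 1
    rw [h2, mul_one, smul_eq_mul, mul_one]

/-- Any `Q`-valued differential operator `Δ` of order `≤ s` on `P` factorizes as
`Δ = h_s ∘ f_Δ` through `h_s : Diff_s(A, Q) → Q`, `h_s(∇) = ∇(1)`, where
`f_Δ : P → Diff_s(A, Q)`, `(f_Δ p)(a) = Δ(a • p)`, is a homomorphism from the `A`-module
`P` to `Diff_s(A, Q)` with its `A•`-module structure `(Φ • a)(b) = Φ(a * b)`; `f_Δ` is the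
unique such homomorphism factorizing `Δ` through `h_s`, and the assignment `Δ ↦ f_Δ` is an
isomorphism (a bijection) of `Diff_s(P, Q)` onto the module of `A`-module homomorphisms
`P → Diff_s(A, Q)•`. -/
theorem diffOp_factorization_and_iso
    {K A P Q : Type*} [CommRing K] [CommRing A] [Algebra K A]
    [AddCommGroup P] [Module K P] [Module A P] [IsScalarTower K A P]
    [AddCommGroup Q] [Module K Q] [Module A Q] [IsScalarTower K A Q]
    (s : ℕ) :
    (∀ Δ : P →ₗ[K] Q, IsDiffOp A s ⇑Δ →
      -- `f_Δ` takes values in the differential operators of order `≤ s` on `A`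
      (∀ p : P, IsDiffOp A s ⇑(fhat A Δ p)) ∧
      -- `f_Δ` is additive
      (∀ p q : P, fhat A Δ (p + q) = fhat A Δ p + fhat A Δ q) ∧
      -- `f_Δ` intertwines the `A`-action on `P` with the `A•`-module structure
      (∀ (a : A) (p : P) (b : A), fhat A Δ (a • p) b = fhat A Δ p (a * b)) ∧
      -- factorization `Δ = h_s ∘ f_Δ`, where `h_s (∇) = ∇ 1`
      (∀ p : P, fhat A Δ p 1 = Δ p) ∧
      -- uniqueness of the factorization
      (∀ g : P → (A →ₗ[K] Q), (∀ p, IsDiffOp A s ⇑(g p)) →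
        (∀ p q, g (p + q) = g p + g q) →
        (∀ (a : A) (p : P) (b : A), g (a • p) b = g p (a * b)) →
        (∀ p, g p 1 = Δ p) → g = fhat A Δ)) ∧
    -- `Δ ↦ f_Δ` is a bijection of `Diff_s(P, Q)` onto `Hom_A(P, Diff_s(A, Q)•)`
    (∀ g : P → (A →ₗ[K] Q), (∀ p, IsDiffOp A s ⇑(g p)) →
      (∀ p q, g (p + q) = g p + g q) →
      (∀ (a : A) (p : P) (b : A), g (a • p) b = g p (a * b)) →
      ∃! Δ : P →ₗ[K] Q, IsDiffOp A s ⇑Δ ∧ fhat A Δ = g) := by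
  constructor
  · intro Δ hΔ
    refine ⟨?_, ?_, ?_, ?_, ?_⟩
    · intro p l hl
      rw [fhat_iter, hΔ l hl]
      rfl
    · intro p q
      ext b
      simp [fhat, smul_add]
    · intro a p b
      simp only [fhat, LinearMap.coe_mk, AddHom.coe_mk]
      rw [smul_smul, mul_comm b a]
    · intro p
      simp [fhat]
    · intro g _ _ hmul hone
      funext p
      ext b
      have : g p b = g (b • p) 1 := by rw [hmul b p 1, mul_one]
      rw [this, hone]
      rfl
  · intro g hdiff hadd hmul
    refine ⟨{ toFun := fun p => g p 1,
              map_add' := fun p q => by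
                show g (p + q) 1 = g p 1 + g q 1
                rw [hadd]; rfl,
              map_smul' := fun c p => by
                show g (c • p) 1 = c • g p 1
                rw [← algebraMap_smul A c p, hmul, mul_one,
                  Algebra.algebraMap_eq_smul_one, map_smul] }, ⟨?_, ?_⟩, ?_⟩
    · intro l hl
      funext p
      have h := g_iter hmul l p
      simp only [LinearMap.coe_mk, AddHom.coe_mk]
      rw [h, hdiff p l hl]
      rfl
    · funext p
      ext b
      simp only [fhat, LinearMap.coe_mk, AddHom.coe_mk]
      rw [hmul b p 1, mul_one]
    · rintro Δ' ⟨_, hΔ'⟩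
      ext p
      have : fhat A Δ' p 1 = g p 1 := by rw [hΔ']
      simpa [fhat] using this
end

section
/- Every smooth vector field on a compact smooth manifold without boundary is complete: if M is a compact smooth manifold without boundary and v is a smooth section of the tangent bundle of M, then for every x₀ ∈ M there exists a curve γ : ℝ → M with γ(0) = x₀ which is an integral curve of v on all of ℝ, i.e. for every t ∈ ℝ the derivative of γ at t equals v(γ(t)). -/
/-!
Picard–Lindelöf in a chart, together with the continuity of the local flow in the initial point,
gives every point a neighbourhood of initial conditions whose integral curves all exist for a
common time `ε > 0`. By compactness one `ε` works for all of `M`, and integral curves that exist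
for a uniform time extend to all of `ℝ` by concatenation (Lee, *Smooth Manifolds*, Lemma 9.15).
-/

open Bundle Set Function Metric Filter
open scoped Manifold Topology

theorem ContDiffAt.exists_pos_eventually_exists_forall_mem_Ioo_mem_hasDerivAt
    {E : Type*} [NormedAddCommGroup E] [NormedSpace ℝ E] [CompleteSpace E]
    {f : E → E} {x₀ : E} (hf : ContDiffAt ℝ 1 f x₀) {u : Set E} (hu : u ∈ 𝓝 x₀) :
    ∃ ε > (0 : ℝ), ∀ᶠ x in 𝓝 x₀, ∃ α : ℝ → E, α 0 = x ∧
      ∀ t ∈ Ioo (-ε) ε, α t ∈ u ∧ HasDerivAt α (f (α t)) t := by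
  obtain ⟨ε, hε, _, r, _, _, hr, hpl⟩ := IsPicardLindelof.of_contDiffAt_one hf
  obtain ⟨α, hα, hcont⟩ :=
    (hpl 0).exists_forall_mem_closedBall_eq_hasDerivWithinAt_continuousOn
  have hdom : closedBall x₀ r ×ˢ Ioo (0 - ε) (0 + ε) ∈ 𝓝 (x₀, (0 : ℝ)) :=
    prod_mem_nhds (closedBall_mem_nhds _ hr) (Ioo_mem_nhds (by linarith) (by linarith))
  have hflow : α ⁻¹' u ∈ 𝓝 (x₀, (0 : ℝ)) := by
    refine (hcont.continuousAt (mem_of_superset hdom ?_)).preimage_mem_nhds ?_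
    · exact prod_mono subset_rfl Ioo_subset_Icc_self
    · rwa [(hα x₀ (mem_closedBall_self r.2)).1]
  obtain ⟨U, hU, T, hT, hUT⟩ := mem_nhds_prod_iff.mp (inter_mem hdom hflow)
  obtain ⟨δ, hδ, hδT⟩ := Metric.mem_nhds_iff.mp hT
  refine ⟨δ, hδ, mem_of_superset hU fun x hx ↦ ?_⟩
  have hxt : ∀ t ∈ Ioo (-δ) δ, (x, t) ∈ (closedBall x₀ r ×ˢ Ioo (0 - ε) (0 + ε)) ∩ α ⁻¹' u :=
    fun t ht ↦ hUT ⟨hx, hδT (by rwa [Real.ball_eq_Ioo, zero_sub, zero_add])⟩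
  have hxr : x ∈ closedBall x₀ r := (hxt 0 ⟨neg_lt_zero.2 hδ, hδ⟩).1.1
  refine ⟨fun t ↦ α (x, t), (hα x hxr).1, fun t ht ↦ ⟨(hxt t ht).2, ?_⟩⟩
  have htε := (hxt t ht).1.2
  exact (hα x hxr).2 t (Ioo_subset_Icc_self htε) |>.hasDerivAt (Icc_mem_nhds htε.1 htε.2)

section

variable {E : Type*} [NormedAddCommGroup E] [NormedSpace ℝ E]
  {H : Type*} [TopologicalSpace H] {I : ModelWithCorners ℝ E H}
  {M : Type*} [TopologicalSpace M] [ChartedSpace H M] [IsManifold I 1 M]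
  {v : (x : M) → TangentSpace I x}

theorem isMIntegralCurveOn_extChartAt_symm_comp {x₀ : M} {α : ℝ → E} {s : Set ℝ}
    (hα : ∀ t ∈ s, α t ∈ interior (extChartAt I x₀).target ∧
      HasDerivAt α (tangentCoordChange I ((extChartAt I x₀).symm (α t)) x₀
        ((extChartAt I x₀).symm (α t)) (v ((extChartAt I x₀).symm (α t)))) t) :
    IsMIntegralCurveOn ((extChartAt I x₀).symm ∘ α) v s := by
  intro t ht
  obtain ⟨hint, hderiv⟩ := hα t ht
  set xₜ : M := (extChartAt I x₀).symm (α t)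
  have htarget : α t ∈ (extChartAt I x₀).target := interior_subset hint
  have hsource₀ : xₜ ∈ (extChartAt I x₀).source := (extChartAt I x₀).map_target htarget
  have hsourceₜ : xₜ ∈ (extChartAt I xₜ).source := mem_extChartAt_source xₜ
  apply HasMFDerivAt.hasMFDerivWithinAt
  refine ⟨(continuousAt_extChartAt_symm'' htarget).comp hderiv.continuousAt, ?_⟩
  change HasFDerivWithinAt (𝕜 := ℝ) (F := E) _ ((1 : ℝ →L[ℝ] ℝ).smulRight (v xₜ : E)) _ _
  apply HasDerivWithinAt.hasFDerivWithinAt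
  simp only [mfld_simps, chartAt_self_eq]
  refine hasDerivWithinAt_univ.mpr
    (?_ : HasDerivAt ((extChartAt I xₜ ∘ (extChartAt I x₀).symm) ∘ α) (v xₜ : E) t)
  -- `hderiv` gives the velocity in the chart at `x₀`; transport it to the chart at `xₜ`.
  have hround_trip : tangentCoordChange I x₀ xₜ xₜ (tangentCoordChange I xₜ x₀ xₜ (v xₜ)) =
      (v xₜ : E) :=
    (tangentCoordChange_comp ⟨⟨hsourceₜ, hsource₀⟩, hsourceₜ⟩).trans
      (tangentCoordChange_self hsourceₜ)
  refine (HasFDerivAt.comp_hasDerivAt _ ?_ hderiv).congr_deriv hround_trip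
  refine HasFDerivWithinAt.hasFDerivAt (s := range I) ?_ <|
    mem_nhds_iff.mpr ⟨interior (extChartAt I x₀).target,
      interior_subset.trans (extChartAt_target_subset_range ..), isOpen_interior, hint⟩
  rw [← (extChartAt I x₀).right_inv htarget]
  exact hasFDerivWithinAt_tangentCoordChange ⟨hsource₀, hsourceₜ⟩

theorem exists_pos_eventually_isMIntegralCurveOn_Ioo [CompleteSpace E] [BoundarylessManifold I M]
    {x₀ : M} (hv : CMDiffAt 1 (fun x ↦ (⟨x, v x⟩ : TangentBundle I M)) x₀) :
    ∃ ε > (0 : ℝ), ∀ᶠ x in 𝓝 x₀, ∃ γ : ℝ → M, γ 0 = x ∧ IsMIntegralCurveOn γ v (Ioo (-ε) ε) := by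
  rw [contMDiffAt_iff] at hv
  obtain ⟨-, hv⟩ := hv
  have hx₀ : I.IsInteriorPoint x₀ := BoundarylessManifold.isInteriorPoint
  obtain ⟨ε, hε, hflow⟩ := (hv.contDiffAt (range_mem_nhds_isInteriorPoint hx₀)).snd
    |>.exists_pos_eventually_exists_forall_mem_Ioo_mem_hasDerivAt
      (isOpen_interior.mem_nhds (I.isInteriorPoint_iff.mp hx₀))
  refine ⟨ε, hε, ?_⟩
  filter_upwards [(continuousAt_extChartAt x₀).eventually hflow,
    extChartAt_source_mem_nhds (I := I) x₀] with x ⟨α, hα₀, hα⟩ hx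
  exact ⟨(extChartAt I x₀).symm ∘ α, by rw [comp_apply, hα₀, (extChartAt I x₀).left_inv hx],
    isMIntegralCurveOn_extChartAt_symm_comp hα⟩

end

theorem CompactSpace.exists_pos_forall_of_eventually {X : Type*} [TopologicalSpace X]
    [CompactSpace X] {P : ℝ → X → Prop} (hanti : ∀ ⦃δ ε⦄, δ ≤ ε → ∀ x, P ε x → P δ x)
    (hloc : ∀ x, ∃ ε > (0 : ℝ), ∀ᶠ y in 𝓝 x, P ε y) :
    ∃ ε > (0 : ℝ), ∀ x, P ε x := by
  obtain ⟨ε, hε, h⟩ : ∃ ε > (0 : ℝ), ∀ x ∈ (univ : Set X), P ε x := by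
    refine isCompact_univ.induction_on (p := fun s ↦ ∃ ε > (0 : ℝ), ∀ x ∈ s, P ε x)
      ⟨1, one_pos, fun _ ↦ False.elim⟩ ?_ ?_ ?_
    · rintro s t hst ⟨ε, hε, ht⟩
      exact ⟨ε, hε, fun x hx ↦ ht x (hst hx)⟩
    · rintro s t ⟨ε, hε, hs⟩ ⟨δ, hδ, ht⟩
      refine ⟨min ε δ, lt_min hε hδ, ?_⟩
      rintro x (hx | hx)
      exacts [hanti (min_le_left ..) x (hs x hx), hanti (min_le_right ..) x (ht x hx)]
    · intro x _
      obtain ⟨ε, hε, h⟩ := hloc x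
      exact ⟨{y | P ε y}, nhdsWithin_le_nhds h, ε, hε, fun y hy ↦ hy⟩
  exact ⟨ε, hε, fun x ↦ h x (mem_univ x)⟩

theorem vector_field_on_compact_manifold_complete_general
    {E : Type*} [NormedAddCommGroup E] [NormedSpace ℝ E] [FiniteDimensional ℝ E]
    {M : Type*} [TopologicalSpace M] [ChartedSpace E M]
    [IsManifold 𝓘(ℝ, E) (⊤ : ℕ∞) M] [T2Space M]
    [CompactSpace M]
    (v : (x : M) → TangentSpace 𝓘(ℝ, E) x)
    (hv : ContMDiff 𝓘(ℝ, E) 𝓘(ℝ, E).tangent (⊤ : ℕ∞)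
      (fun x => (TotalSpace.mk x (v x) : TangentBundle 𝓘(ℝ, E) M))) :
    ∀ x₀ : M, ∃ γ : ℝ → M, γ 0 = x₀ ∧ IsMIntegralCurve γ v := by
  have hv₁ : ContMDiff 𝓘(ℝ, E) 𝓘(ℝ, E).tangent 1
      (fun x => (TotalSpace.mk x (v x) : TangentBundle 𝓘(ℝ, E) M)) :=
    hv.of_le (by exact_mod_cast le_top)
  obtain ⟨ε, hε, hcurves⟩ := CompactSpace.exists_pos_forall_of_eventually
    (P := fun ε x ↦ ∃ γ : ℝ → M, γ 0 = x ∧ IsMIntegralCurveOn γ v (Ioo (-ε) ε))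
    (fun _ _ hδε _ ⟨γ, hγ₀, hγ⟩ ↦ ⟨γ, hγ₀, hγ.mono (Ioo_subset_Ioo (neg_le_neg hδε) hδε)⟩)
    (fun x ↦ exists_pos_eventually_isMIntegralCurveOn_Ioo (hv₁ x))
  exact exists_isMIntegralCurve_of_isMIntegralCurveOn hv₁ hε hcurves

/-- Every smooth vector field on a compact smooth manifold without boundary is complete:
through every point there is an integral curve of the vector field defined on all of `ℝ`. -/
theorem vector_field_on_compact_manifold_complete
    {E : Type*} [NormedAddCommGroup E] [NormedSpace ℝ E] [FiniteDimensional ℝ E]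
    {M : Type*} [TopologicalSpace M] [ChartedSpace E M]
    [IsManifold 𝓘(ℝ, E) (⊤ : ℕ∞) M] [T2Space M] [SecondCountableTopology M]
    [CompactSpace M]
    (v : (x : M) → TangentSpace 𝓘(ℝ, E) x)
    (hv : ContMDiff 𝓘(ℝ, E) 𝓘(ℝ, E).tangent (⊤ : ℕ∞)
      (fun x => (TotalSpace.mk x (v x) : TangentBundle 𝓘(ℝ, E) M))) :
    ∀ x₀ : M, ∃ γ : ℝ → M, γ 0 = x₀ ∧ IsMIntegralCurve γ v :=
  vector_field_on_compact_manifold_complete_general v hv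
end

section
/- Let p : E → B be a topological fibre bundle whose typical fibre is ℝ^m, over a paracompact Hausdorff base B. Then p admits a continuous global section; moreover, for every closed subset A ⊆ B, any continuous section of p defined on an open neighbourhood of A extends to a continuous global section agreeing with it on A (in particular, any value e ∈ E_b at a point b ∈ B is attained by some global section). -/
/-!
Over a normal base, a section that is continuous on a closed set `C` can be extended
continuously across a closed set `K` lying in a trivializing open set: in the
trivialization the section becomes an `F`-valued map on `C ∩ K`, which the Tietze extension
theorem extends to `K`. A paracompact Hausdorff base is normal and has a locally finite
closed cover by such sets `K i`; Zorn's lemma applied to sections extended over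
`C ∪ ⋃ i ∈ J, K i` yields one with `J` everything, since local finiteness makes the union
over a chain continuous.
-/

open Set Topology Bundle

universe u v

theorem exists_locallyFinite_closed_refinement {ι X : Type*} [TopologicalSpace X]
    [ParacompactSpace X] [T2Space X] (u : ι → Set X) (uo : ∀ i, IsOpen (u i))
    (uc : ⋃ i, u i = univ) :
    ∃ K : ι → Set X, (∀ i, IsClosed (K i)) ∧ LocallyFinite K ∧ ⋃ i, K i = univ ∧
      ∀ i, K i ⊆ u i := by
  obtain ⟨v, hvo, hvc, hvlf, hvu⟩ := precise_refinement u uo uc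
  obtain ⟨w, hwc, -, hwv⟩ := exists_iUnion_eq_closure_subset hvo hvlf.point_finite hvc
  refine ⟨fun i => closure (w i), fun _ => isClosed_closure, hvlf.subset hwv,
    univ_subset_iff.1 (hwc ▸ iUnion_mono fun _ => subset_closure),
    fun i => (hwv i).trans (hvu i)⟩

namespace Bundle

variable {B : Type u} {F : Type v} [TopologicalSpace B] {E : B → Type*}
  [TopologicalSpace (TotalSpace F E)]

theorem Trivialization.exists_continuousOn_section_extension [NormalSpace B]
    [TopologicalSpace F] [TietzeExtension.{u, v} F] (e : Trivialization F (π F E))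
    {C K : Set B} (hC : IsClosed C) (hK : IsClosed K) (hKe : K ⊆ e.baseSet) {s : ∀ b, E b}
    (hs : ContinuousOn (fun b => TotalSpace.mk' F b (s b)) C) :
    ∃ s' : ∀ b, E b, ContinuousOn (fun b => TotalSpace.mk' F b (s' b)) (C ∪ K) ∧
      ∀ b ∈ C, s' b = s b := by
  classical
  have : ∀ b, Nonempty (E b) := fun b => ⟨s b⟩
  have hf : ContinuousOn (fun b => (e ⟨b, s b⟩).2) (C ∩ K) :=
    continuous_snd.comp_continuousOn <| e.continuousOn.comp (hs.mono inter_subset_left)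
      fun b hb => e.mem_source.2 (hKe hb.2)
  obtain ⟨g, hg⟩ := ContinuousMap.exists_restrict_eq (hC.inter hK) ⟨_, hf.domRestrict⟩
  have hgCK : ∀ b ∈ C ∩ K, g b = (e ⟨b, s b⟩).2 := fun b hb =>
    ContinuousMap.congr_fun hg ⟨b, hb⟩
  refine ⟨fun b => if b ∈ C then s b else e.symm b (g b), ?_, fun b hb => if_pos hb⟩
  refine ContinuousOn.union_of_isClosed ?_ ?_ hC hK
  · exact hs.congr fun b hb => by simp only [if_pos hb]
  · refine (e.continuousOn_symm.comp (continuous_id.prodMk g.continuous).continuousOn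
      fun b hb => ⟨hKe hb, mem_univ _⟩).congr fun b hb => ?_
    by_cases hbC : b ∈ C
    · simp [hbC, hgCK b ⟨hbC, hb⟩, e.symm_apply_apply_mk (hKe hb)]
    · simp [hbC]

variable (F E) in
structure PartialSection {ι : Type*} (C : Set B) (K : ι → Set B) where
  J : Set ι
  s : ∀ b, E b
  continuousOn : ContinuousOn (fun b => TotalSpace.mk' F b (s b)) (C ∪ ⋃ i ∈ J, K i)

namespace PartialSection

variable {ι : Type*} {C : Set B} {K : ι → Set B}

def dom (σ : PartialSection F E C K) : Set B := C ∪ ⋃ i ∈ σ.J, K i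

theorem dom_mono {σ τ : PartialSection F E C K} (h : σ.J ⊆ τ.J) : σ.dom ⊆ τ.dom :=
  union_subset_union_right _ (biUnion_subset_biUnion_left h)

theorem isClosed_dom (hC : IsClosed C) (hK : ∀ i, IsClosed (K i)) (hKlf : LocallyFinite K)
    (σ : PartialSection F E C K) : IsClosed σ.dom :=
  hC.union <| biUnion_eq_iUnion σ.J (fun i _ => K i) ▸
    (hKlf.comp_injective Subtype.val_injective).isClosed_iUnion fun i => hK i

instance : Preorder (PartialSection F E C K) where
  le σ τ := σ.J ⊆ τ.J ∧ ∀ b ∈ σ.dom, τ.s b = σ.s b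
  le_refl σ := ⟨subset_rfl, fun _ _ => rfl⟩
  le_trans σ τ υ h₁ h₂ :=
    ⟨h₁.1.trans h₂.1, fun b hb => (h₂.2 b (dom_mono h₁.1 hb)).trans (h₁.2 b hb)⟩

theorem exists_le_and_mem_J [NormalSpace B] [TopologicalSpace F] [TietzeExtension.{u, v} F]
    (hC : IsClosed C) (hK : ∀ i, IsClosed (K i)) (hKlf : LocallyFinite K) {i : ι}
    {e : Trivialization F (π F E)}
    (he : K i ⊆ e.baseSet) (σ : PartialSection F E C K) :
    ∃ τ : PartialSection F E C K, σ ≤ τ ∧ i ∈ τ.J := by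
  obtain ⟨s, hs, hsσ⟩ := e.exists_continuousOn_section_extension (σ.isClosed_dom hC hK hKlf)
    (hK i) he σ.continuousOn
  refine ⟨⟨insert i σ.J, s, hs.mono ?_⟩, ⟨subset_insert _ _, hsσ⟩, mem_insert _ _⟩
  rw [biUnion_insert, dom]
  intro b hb
  simp only [mem_union] at hb ⊢
  tauto

theorem exists_forall_le_of_isChain (hKlf : LocallyFinite K)
    {c : Set (PartialSection F E C K)} (hc : IsChain (· ≤ ·) c) (hne : c.Nonempty) :
    ∃ τ : PartialSection F E C K, ∀ σ ∈ c, σ ≤ τ := by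
  classical
  let s : ∀ b, E b := fun b =>
    if h : ∃ σ ∈ c, b ∈ σ.dom then h.choose.s b else hne.some.s b
  have hs : ∀ σ ∈ c, ∀ b ∈ σ.dom, s b = σ.s b := by
    intro σ hσ b hb
    have h : ∃ σ ∈ c, b ∈ σ.dom := ⟨σ, hσ, hb⟩
    obtain ⟨hσ', hb'⟩ := h.choose_spec
    rw [show s b = h.choose.s b from dif_pos h]
    rcases hc.total hσ' hσ with hle | hle
    · exact (hle.2 b hb').symm
    · exact hle.2 b hb
  let D := C ∪ ⋃ i ∈ ⋃ σ ∈ c, σ.J, K i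
  have hcont : ContinuousOn (fun b => TotalSpace.mk' F b (s b)) D := by
    intro x hx
    obtain ⟨N, hN, hNfin⟩ := hKlf x
    have hT : ({i | (K i ∩ N).Nonempty} ∩ ⋃ σ ∈ c, σ.J).Finite := hNfin.inter_of_left _
    -- a chain is directed, so one `τ ∈ c` contains the finitely many `K i` meeting `N`
    obtain ⟨τ, hτc, hτ⟩ := DirectedOn.exists_mem_subset_of_finset_subset_biUnion hne
      (fun σ hσ σ' hσ' =>
        (hc.directedOn σ hσ σ' hσ').imp fun _ h => ⟨h.1, h.2.1.1, h.2.2.1⟩)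
      (hT.coe_toFinset.symm ▸ inter_subset_right)
    have hsub : D ∩ N ⊆ τ.dom := by
      rintro b ⟨hb | hb, hbN⟩
      · exact Or.inl hb
      · obtain ⟨i, hi, hbi⟩ := mem_iUnion₂.1 hb
        have hiT : i ∈ hT.toFinset := hT.mem_toFinset.2 ⟨⟨b, hbi, hbN⟩, hi⟩
        exact Or.inr (mem_biUnion (hτ hiT) hbi)
    have hxτ : x ∈ τ.dom := hsub ⟨hx, mem_of_mem_nhds hN⟩
    refine (continuousWithinAt_inter hN).1 <| ((τ.continuousOn x hxτ).mono hsub).congr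
      (fun b hb => congrArg (TotalSpace.mk b) (hs τ hτc b (hsub hb)))
      (congrArg (TotalSpace.mk x) (hs τ hτc x hxτ))
  exact ⟨⟨_, s, hcont⟩, fun σ hσ =>
    ⟨subset_biUnion_of_mem (u := PartialSection.J) hσ, hs σ hσ⟩⟩

end PartialSection

theorem exists_continuousOn_section_extension_of_locallyFinite [NormalSpace B]
    [TopologicalSpace F] [TietzeExtension.{u, v} F] {ι : Type*} {C : Set B} {K : ι → Set B}
    (hC : IsClosed C) (hK : ∀ i, IsClosed (K i)) (hKlf : LocallyFinite K)
    (hKe : ∀ i, ∃ e : Trivialization F (π F E), K i ⊆ e.baseSet) {s : ∀ b, E b}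
    (hs : ContinuousOn (fun b => TotalSpace.mk' F b (s b)) C) :
    ∃ s' : ∀ b, E b, ContinuousOn (fun b => TotalSpace.mk' F b (s' b)) (C ∪ ⋃ i, K i) ∧
      ∀ b ∈ C, s' b = s b := by
  let σ₀ : PartialSection F E C K := ⟨∅, s, by simpa using hs⟩
  obtain ⟨μ, hσ₀μ, hμ⟩ := zorn_le_nonempty_Ici₀ σ₀
    (fun c _ hc σ hσ => PartialSection.exists_forall_le_of_isChain hKlf hc ⟨σ, hσ⟩) σ₀ le_rfl
  have hJ : μ.J = univ := eq_univ_of_forall fun i => by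
    obtain ⟨e, he⟩ := hKe i
    obtain ⟨τ, hμτ, hiτ⟩ := μ.exists_le_and_mem_J hC hK hKlf he
    exact (hμ hμτ).1 hiτ
  refine ⟨μ.s, by simpa [hJ] using μ.continuousOn, fun b hb => hσ₀μ.2 b (Or.inl hb)⟩

end Bundle

namespace FiberBundle

variable {B : Type u} {F : Type v} [TopologicalSpace B] [TopologicalSpace F] {E : B → Type*}
  [∀ b, TopologicalSpace (E b)] [TopologicalSpace (TotalSpace F E)] [FiberBundle F E]

theorem nonempty_fiber [Nonempty F] (b : B) : Nonempty (E b) :=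
  let e := trivializationAt F E b
  ⟨e.symm_coe_proj (mem_baseSet_trivializationAt F E b) ▸
    (e.toOpenPartialHomeomorph.symm (b, Classical.arbitrary F)).2⟩

theorem exists_continuous_section_extension [ParacompactSpace B] [T2Space B]
    [TietzeExtension.{u, v} F] {A U : Set B} (hA : IsClosed A) (hU : IsOpen U) (hAU : A ⊆ U)
    {s₀ : ∀ b, E b} (hs₀ : ContinuousOn (fun b => TotalSpace.mk' F b (s₀ b)) U) :
    ∃ s : ∀ b, E b, Continuous (fun b => TotalSpace.mk' F b (s b)) ∧ ∀ b ∈ A, s b = s₀ b := by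
  obtain ⟨V, -, hAV, hVU⟩ := normal_exists_closure_subset hA hU hAU
  obtain ⟨K, hK, hKlf, hKc, hKe⟩ := exists_locallyFinite_closed_refinement
    (fun b => (trivializationAt F E b).baseSet) (fun b => (trivializationAt F E b).open_baseSet)
    (iUnion_eq_univ_iff.2 fun b => ⟨b, mem_baseSet_trivializationAt F E b⟩)
  obtain ⟨s, hs, hsV⟩ := exists_continuousOn_section_extension_of_locallyFinite isClosed_closure
    hK hKlf (fun b => ⟨_, hKe b⟩) (hs₀.mono hVU)
  refine ⟨s, ?_, fun b hb => hsV b (subset_closure (hAV hb))⟩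
  rw [← continuousOn_univ]
  simpa [hKc] using hs

end FiberBundle

/-- A topological fibre bundle whose typical fibre is `ℝ^m`, over a paracompact Hausdorff
base, admits a continuous global section; moreover every continuous section given on an
open neighbourhood of a closed set `A` extends to a continuous global section agreeing
with it on `A`. -/
theorem fiber_bundle_euclidean_fibre_sections
    {B : Type*} [TopologicalSpace B] [ParacompactSpace B] [T2Space B] {m : ℕ}
    (E : B → Type*) [∀ b, TopologicalSpace (E b)]
    [TopologicalSpace (Bundle.TotalSpace (Fin m → ℝ) E)]
    [FiberBundle (Fin m → ℝ) E] :
    (∃ s : ∀ b, E b,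
        Continuous fun b => (Bundle.TotalSpace.mk b (s b) : Bundle.TotalSpace (Fin m → ℝ) E)) ∧
    ∀ (A U : Set B), IsClosed A → IsOpen U → A ⊆ U →
      ∀ s₀ : ∀ b, E b,
        ContinuousOn (fun b => (Bundle.TotalSpace.mk b (s₀ b) : Bundle.TotalSpace (Fin m → ℝ) E)) U →
        ∃ s : ∀ b, E b,
          Continuous (fun b => (Bundle.TotalSpace.mk b (s b) : Bundle.TotalSpace (Fin m → ℝ) E)) ∧
          ∀ b ∈ A, s b = s₀ b := by
  have := FiberBundle.nonempty_fiber (F := Fin m → ℝ) (E := E)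
  refine ⟨?_, fun A U hA hU hAU s₀ hs₀ =>
    FiberBundle.exists_continuous_section_extension hA hU hAU hs₀⟩
  obtain ⟨s, hs, -⟩ := FiberBundle.exists_continuous_section_extension (F := Fin m → ℝ)
    isClosed_empty isOpen_empty subset_rfl (s₀ := fun b => Classical.arbitrary (E b))
    (continuousOn_empty _)
  exact ⟨s, hs⟩
end
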